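/- arXiv:1709.03857 — 2 statements merged into one kernel-verified Lean document; each statement's English description precedes it below -/
import Mathlib

section
/- Let p be a prime and let G be a finite semi-extraspecial p-group with |G : G'| = p^{2a} and |G'| = p^b. Then: (1) every abelian subgroup of G has order at most p^{a+b}; and (2) for every element g ∈ G \ G', the center of the centralizer C_G(g) satisfies p^{b+1} ≤ |Z(C_G(g))| ≤ p^{2b}. -/
/-- A finite `p`-group is extraspecial if it is nonabelian, its derived subgroup,
center and Frattini subgroup coincide, and its center has order `p`. -/
def IsExtraspecial (p : ℕ) (G : Type*) [Group G] : Prop :=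
  (∃ a b : G, a * b ≠ b * a) ∧
  commutator G = Subgroup.center G ∧
  Subgroup.center G = frattini G ∧
  Nat.card (Subgroup.center G) = p

/-- A `p`-group is semi-extraspecial if for every subgroup `N` of the center of
index `p` in the center (such subgroups are automatically normal in `G`),
the quotient `G ⧸ N` is extraspecial. -/
def IsSemiExtraspecial (p : ℕ) (G : Type*) [Group G] : Prop :=
  ∀ (N : Subgroup G) [N.Normal], N ≤ Subgroup.center G →
    (N.subgroupOf (Subgroup.center G)).index = p → IsExtraspecial p (G ⧸ N)

/-!
Let `Z = Z(G)`. For `N ≤ Z` of index `p` in `Z`, the center of the extraspecial group `G ⧸ N`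
is `Z ⧸ N`, as both have order `p`. Comparing derived subgroups gives `G' ⊔ N = Z` for every such
`N`, so `G' = Z`. An element `x ∉ Z` stays noncentral modulo every such `N`, so `y ↦ ⁅x, y⁆` maps
`G` onto `Z` and `|G : C_G(x)| = |Z|`.

For abelian `A`, let `Ā` be its image in `E = G ⧸ N`. Modulo `Z(E)`, an element `b ∈ Ā` is
determined by the homomorphism `y ↦ ⁅b, y⁆` from `E ⧸ C_E(Ā)` to `Z(E) ≅ C_p`, and there are at
most `|E : C_E(Ā)| ≤ |E : Ā|` of these; so `|Ā|² ≤ p |E|`, and `|A| ≤ |N| |Ā|` gives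
`|A|² ≤ |Z| |G|`.

For `g ∉ Z`, the center of `C = C_G(g)` contains `Z` and `g`, which gives the lower bound. For the
upper bound fix `y ∉ C`: the kernel of `x ↦ ⁅y, x⁆` on `Z(C)` lies in `Z`, because a noncentral
`x ∈ Z(C)` has `C ≤ C_G(x)` with both of index `|Z|`, so `C_G(x) = C ∌ y`.
-/

open Subgroup
open scoped commutatorElement IsMulCommutative

theorem IsCyclic.exists_monoidHom_units_complex_injective (Z : Type*) [CommGroup Z] [IsCyclic Z]
    [Finite Z] : ∃ ι : Z →* ℂˣ, Function.Injective ι := by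
  have : NeZero (Nat.card Z) := ⟨Nat.card_pos.ne'⟩
  let e : Z ≃* rootsOfUnity (Nat.card Z) ℂ := mulEquivOfCyclicCardEq
    (HasEnoughRootsOfUnity.natCard_rootsOfUnity ℂ (Nat.card Z)).symm
  exact ⟨(rootsOfUnity (Nat.card Z) ℂ).subtype.comp e.toMonoidHom,
    Subtype.val_injective.comp e.injective⟩

theorem card_monoidHom_le_card_of_isCyclic (Q Z : Type*) [Group Q] [Finite Q] [CommGroup Z]
    [IsCyclic Z] [Finite Z] : Nat.card (Q →* Z) ≤ Nat.card Q := by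
  obtain ⟨ι, hι⟩ := IsCyclic.exists_monoidHom_units_complex_injective Z
  have : NeZero (Monoid.exponent (Abelianization Q)) := ⟨Monoid.exponent_ne_zero_of_finite⟩
  have hdual : Nat.card (Q →* ℂˣ) = Nat.card (Abelianization Q) :=
    (Nat.card_congr Abelianization.lift).trans
      (CommGroup.card_monoidHom_of_hasEnoughRootsOfUnity _ ℂ)
  have : Finite (Q →* ℂˣ) := Nat.finite_of_card_ne_zero (hdual ▸ Nat.card_pos.ne')
  calc Nat.card (Q →* Z) ≤ Nat.card (Q →* ℂˣ) :=
        Nat.card_le_card_of_injective (ι.comp ·) fun f g h => MonoidHom.ext fun q =>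
          hι (DFunLike.congr_fun h q)
    _ = Nat.card (Abelianization Q) := hdual
    _ ≤ Nat.card Q := Nat.card_le_card_of_surjective _ QuotientGroup.mk_surjective

theorem MonoidHom.card_eq_card_ker_mul_card_range {M N : Type*} [Group M] [Group N]
    (f : M →* N) : Nat.card M = Nat.card f.ker * Nat.card f.range := by
  rw [← f.ker.card_mul_index, Subgroup.index_ker]

namespace Subgroup

variable {G : Type*} [Group G]

theorem normal_of_le_center {N : Subgroup G} (hN : N ≤ center G) : N.Normal where
  conj_mem n hn g := by rwa [mem_center_iff.mp (hN hn) g, mul_inv_cancel_right]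

theorem card_eq_card_mul_relIndex {H K : Subgroup G} (hHK : H ≤ K) :
    Nat.card K = Nat.card H * H.relIndex K := by
  rw [← (H.subgroupOf K).card_mul_index, Nat.card_congr (subgroupOfEquivOfLe hHK).toEquiv]
  rfl

theorem card_le_card_ker_mul_card_map [Finite G] {G' : Type*} [Group G'] (f : G →* G')
    (H : Subgroup G) : Nat.card H ≤ Nat.card f.ker * Nat.card (H.map f) := by
  rw [← relIndex_ker, ← (f.ker.subgroupOf H).card_mul_index]
  exact Nat.mul_le_mul_right _ (Nat.card_le_card_of_injective (fun x => ⟨x.1.1, x.2⟩)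
    fun x y h => by ext; simpa using congrArg Subtype.val h)

end Subgroup

section NilpotencyClassTwo

variable {G : Type*} [Group G]

theorem commutatorElement_mem_center_of_commutator_le (hG : commutator G ≤ center G) (x y : G) :
    ⁅x, y⁆ ∈ center G :=
  hG (commutator_mem_commutator (mem_top x) (mem_top y))

def commutatorPairing (hG : commutator G ≤ center G) : G →* G →* center G where
  toFun x :=
    { toFun y := ⟨⁅x, y⁆, commutatorElement_mem_center_of_commutator_le hG x y⟩
      map_one' := by ext; simp
      map_mul' y y' := by
        ext
        change ⁅x, y * y'⁆ = ⁅x, y⁆ * ⁅x, y'⁆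
        have hc := mem_center_iff.mp (commutatorElement_mem_center_of_commutator_le hG x y') y
        calc ⁅x, y * y'⁆ = ⁅x, y⁆ * (y * ⁅x, y'⁆ * y⁻¹) := by group
          _ = ⁅x, y⁆ * ⁅x, y'⁆ := by rw [hc, mul_inv_cancel_right] }
  map_one' := by ext; simp
  map_mul' x x' := by
    ext y
    change ⁅x * x', y⁆ = ⁅x, y⁆ * ⁅x', y⁆
    have hc := mem_center_iff.mp (commutatorElement_mem_center_of_commutator_le hG x' y)
    calc ⁅x * x', y⁆ = x * ⁅x', y⁆ * x⁻¹ * ⁅x, y⁆ := by group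
      _ = ⁅x, y⁆ * ⁅x', y⁆ := by rw [hc x, mul_inv_cancel_right, hc]

@[simp]
theorem coe_commutatorPairing_apply (hG : commutator G ≤ center G) (x y : G) :
    (commutatorPairing hG x y : G) = ⁅x, y⁆ :=
  rfl

theorem commutatorPairing_apply_eq_one_iff (hG : commutator G ≤ center G) {x y : G} :
    commutatorPairing hG x y = 1 ↔ x * y = y * x := by
  rw [← commutatorElement_eq_one_iff_mul_comm, ← coe_commutatorPairing_apply hG,
    OneMemClass.coe_eq_one]

theorem ker_commutatorPairing (hG : commutator G ≤ center G) (x : G) :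
    (commutatorPairing hG x).ker = centralizer {x} := by
  ext y
  rw [MonoidHom.mem_ker, commutatorPairing_apply_eq_one_iff, mem_centralizer_singleton_iff,
    eq_comm]

theorem index_centralizer_le_card_center [Finite G] (hG : commutator G ≤ center G) (x : G) :
    (centralizer {x}).index ≤ Nat.card (center G) := by
  rw [← ker_commutatorPairing hG x, index_ker]
  exact card_le_card_group _

theorem card_mul_self_le_card_center_mul_card_of_isMulCommutative [Finite G]
    (hG : commutator G ≤ center G) [IsCyclic (center G)] (B : Subgroup G) [IsMulCommutative B] :
    Nat.card B * Nat.card B ≤ Nat.card (center G) * Nat.card G := by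
  set C := centralizer (B : Set G)
  have : C.Normal := .of_commutator_le G (hG.trans (center_le_centralizer _))
  have hCker (b : B) : C ≤ (commutatorPairing hG b).ker := fun c hc => by
    rw [ker_commutatorPairing, mem_centralizer_singleton_iff]
    exact (mem_centralizer_iff.mp hc b b.2).symm
  let θ : B →* (G ⧸ C →* center G) :=
    MonoidHom.mk' (fun b => QuotientGroup.lift C (commutatorPairing hG b) (hCker b))
      fun b b' => by ext; simp
  have hker : Nat.card θ.ker ≤ Nat.card (center G) := by
    refine Nat.card_le_card_of_injective (fun b => ⟨b.1.1, mem_center_iff.mpr fun y => ?_⟩)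
      fun b b' h => by ext; simpa using congrArg Subtype.val h
    exact ((commutatorPairing_apply_eq_one_iff hG).mp (DFunLike.congr_fun b.2 (y : G ⧸ C))).symm
  have : Finite (G ⧸ C →* center G) := Finite.of_injective _ DFunLike.coe_injective
  have hrange : Nat.card θ.range ≤ Nat.card (G ⧸ C) :=
    (Nat.card_le_card_of_injective _ Subtype.val_injective).trans
      (card_monoidHom_le_card_of_isCyclic _ _)
  have hindex : C.index ≤ B.index := index_antitone (le_centralizer B)
  calc Nat.card B * Nat.card B
      = Nat.card θ.ker * Nat.card θ.range * Nat.card B := by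
        rw [← θ.card_eq_card_ker_mul_card_range]
    _ ≤ Nat.card (center G) * B.index * Nat.card B := by
        gcongr
        exact hrange.trans (C.index_eq_card ▸ hindex)
    _ = Nat.card (center G) * Nat.card G := by rw [mul_assoc, B.index_mul_card]

theorem centralizer_eq_of_le [Finite G] (hG : commutator G ≤ center G) {g x : G}
    (hx : Nat.card (center G) ≤ (centralizer {x}).index)
    (hle : centralizer {g} ≤ centralizer {x}) : centralizer {g} = centralizer {x} := by
  refine eq_of_le_of_card_ge hle (Nat.le_of_mul_le_mul_right (c := (centralizer {x}).index) ?_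
    (Nat.pos_of_ne_zero (centralizer {x}).index_ne_zero_of_finite))
  rw [card_mul_index, ← (centralizer {g}).card_mul_index]
  exact Nat.mul_le_mul_left _ ((index_centralizer_le_card_center hG g).trans hx)

theorem card_center_centralizer_le_sq [Finite G] (hG : commutator G ≤ center G)
    (hind : ∀ x ∉ center G, Nat.card (center G) ≤ (centralizer {x}).index)
    {g : G} (hg : g ∉ center G) :
    Nat.card (center (centralizer {g})) ≤ Nat.card (center G) ^ 2 := by
  set C := centralizer {g}
  obtain ⟨y, hy⟩ : ∃ y, y ∉ C := by
    by_contra! h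
    exact hg (mem_center_iff.mpr fun y => mem_centralizer_singleton_iff.mp (h y))
  let Θ : center C →* center G :=
    (commutatorPairing hG y).comp (C.subtype.comp (center C).subtype)
  have hker : Nat.card Θ.ker ≤ Nat.card (center G) := by
    refine Nat.card_le_card_of_injective (fun x => ⟨x.1.1.1, ?_⟩)
      fun x x' h => by ext; simpa using congrArg Subtype.val h
    by_contra hx
    have hCx : C ≤ centralizer {(x.1.1 : G)} := fun c hc => mem_centralizer_singleton_iff.mpr
      (congrArg Subtype.val (mem_center_iff.mp x.1.2 ⟨c, hc⟩))
    have hyx : y ∈ centralizer {(x.1.1 : G)} :=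
      mem_centralizer_singleton_iff.mpr ((commutatorPairing_apply_eq_one_iff hG).mp x.2)
    rw [← centralizer_eq_of_le hG (hind _ hx) hCx] at hyx
    exact hy hyx
  calc Nat.card (center C)
      = Nat.card Θ.ker * Nat.card Θ.range := Θ.card_eq_card_ker_mul_card_range
    _ ≤ Nat.card (center G) * Nat.card (center G) := Nat.mul_le_mul hker (card_le_card_group _)
    _ = Nat.card (center G) ^ 2 := (sq _).symm

end NilpotencyClassTwo

namespace IsPGroup

variable {p : ℕ} [hp : Fact p.Prime] {G : Type*} [Group G] [Finite G]

theorem exists_le_index_eq_prime (hG : IsPGroup p G) {H : Subgroup G} (hH : H ≠ ⊤) :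
    ∃ M : Subgroup G, H ≤ M ∧ M.index = p := by
  obtain ⟨k, hk⟩ := hG.exists_card_eq
  obtain ⟨n, hn⟩ := (hG.to_subgroup H).exists_card_eq
  have hnk : n < k := by
    have := lt_of_le_of_ne H.card_le_card_group (mt H.card_eq_iff_eq_top.mp hH)
    rwa [hn, hk, Nat.pow_lt_pow_iff_right hp.out.one_lt] at this
  obtain ⟨M, hM, hHM⟩ := Sylow.exists_subgroup_card_pow_prime_le p (m := k - 1)
    (hk ▸ pow_dvd_pow p (k.sub_le 1)) H hn (by omega)
  refine ⟨M, hHM, Nat.eq_of_mul_eq_mul_left (pow_pos hp.out.pos (k - 1)) ?_⟩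
  rw [← hM, M.card_mul_index, hk, hM, ← pow_succ, Nat.sub_add_cancel (by omega)]

theorem exists_le_le_relIndex_eq_prime (hG : IsPGroup p G) {H K : Subgroup G} (hHK : H ≤ K)
    (hne : H ≠ K) : ∃ N : Subgroup G, H ≤ N ∧ N ≤ K ∧ N.relIndex K = p := by
  obtain ⟨M, hHM, hM⟩ := (hG.to_subgroup K).exists_le_index_eq_prime (H := H.subgroupOf K)
    fun h => hne (le_antisymm hHK (subgroupOf_eq_top.mp h))
  refine ⟨M.map K.subtype, fun x hx => ⟨⟨x, hHK hx⟩, hHM hx, rfl⟩, map_subtype_le M, ?_⟩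
  rw [relIndex, subgroupOf, comap_map_eq_self_of_injective K.subtype_injective, hM]

theorem prime_mul_card_le_card_of_lt (hG : IsPGroup p G) {H K : Subgroup G} (hHK : H < K) :
    p * Nat.card H ≤ Nat.card K := by
  obtain ⟨n, hn⟩ := (hG.to_subgroup K).index (H.subgroupOf K)
  have hn0 : n ≠ 0 := by
    rintro rfl
    exact hHK.not_ge (relIndex_eq_one.mp hn)
  rw [card_eq_card_mul_relIndex hHK.le, mul_comm p]
  refine Nat.mul_le_mul_left _ ?_
  change p ≤ (H.subgroupOf K).index
  exact hn ▸ Nat.le_self_pow hn0 p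

theorem prime_mul_card_center_le_card_center_centralizer (hG : IsPGroup p G) {g : G}
    (hg : g ∉ center G) : p * Nat.card (center G) ≤ Nat.card (center (centralizer {g})) := by
  set C := centralizer {g}
  have hgC : (⟨g, mem_centralizer_singleton_iff.mpr rfl⟩ : C) ∈ center C :=
    mem_center_iff.mpr fun c => Subtype.ext (mem_centralizer_singleton_iff.mp c.2)
  have hlt : (center G).subgroupOf C < center C :=
    lt_of_le_of_ne (fun x hx => mem_center_iff.mpr fun c => Subtype.ext (mem_center_iff.mp hx c))
      fun h => hg (by rw [← h] at hgC; exact hgC)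
  calc p * Nat.card (center G) = p * Nat.card ((center G).subgroupOf C) := by
        rw [Nat.card_congr (subgroupOfEquivOfLe (center_le_centralizer _)).toEquiv]
    _ ≤ Nat.card (center C) := (hG.to_subgroup C).prime_mul_card_le_card_of_lt hlt

end IsPGroup

namespace IsSemiExtraspecial

variable {p : ℕ} {G : Type*} [Group G] [Finite G]

theorem comap_center_quotient (hse : IsSemiExtraspecial p G) {N : Subgroup G} [N.Normal]
    (hNZ : N ≤ center G) (hN : N.relIndex (center G) = p) :
    (center (G ⧸ N)).comap (QuotientGroup.mk' N) = center G := by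
  have hle : center G ≤ (center (G ⧸ N)).comap (QuotientGroup.mk' N) := fun z hz =>
    mem_center_iff.mpr fun q => by
      induction q using QuotientGroup.induction_on with
      | H y => rw [QuotientGroup.mk'_apply, ← QuotientGroup.mk_mul, ← QuotientGroup.mk_mul,
          mem_center_iff.mp hz y]
  have hrel :=
    relIndex_ker (K := (center (G ⧸ N)).comap (QuotientGroup.mk' N)) (QuotientGroup.mk' N)
  rw [QuotientGroup.ker_mk', map_comap_eq_self_of_surjective (QuotientGroup.mk'_surjective N)]
    at hrel
  refine (eq_of_le_of_card_ge hle ?_).symm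
  rw [card_eq_card_mul_relIndex (hNZ.trans hle), card_eq_card_mul_relIndex hNZ, hN, hrel,
    (hse N hNZ hN).2.2.2]

theorem commutator_sup_eq_center (hse : IsSemiExtraspecial p G) {N : Subgroup G} [N.Normal]
    (hNZ : N ≤ center G) (hN : N.relIndex (center G) = p) : commutator G ⊔ N = center G := by
  have hmap : (commutator G).map (QuotientGroup.mk' N) = commutator (G ⧸ N) := by
    rw [map_commutator_eq, (QuotientGroup.mk' N).range_eq_top.mpr (QuotientGroup.mk'_surjective N),
      _root_.commutator_def]
  rw [← hse.comap_center_quotient hNZ hN, ← (hse N hNZ hN).2.1, ← hmap, comap_map_eq,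
    QuotientGroup.ker_mk']

theorem commutator_eq_center (hp : p.Prime) (hG : IsPGroup p G) (hse : IsSemiExtraspecial p G) :
    commutator G = center G := by
  have : Fact p.Prime := ⟨hp⟩
  rcases subsingleton_or_nontrivial G with _ | _
  · exact Subsingleton.elim _ _
  have key {N : Subgroup G} (hNZ : N ≤ center G) (hN : N.relIndex (center G) = p) :
      commutator G ⊔ N = center G :=
    have := normal_of_le_center hNZ
    hse.commutator_sup_eq_center hNZ hN
  obtain ⟨N, -, hNZ, hN⟩ := hG.exists_le_le_relIndex_eq_prime bot_le
    ((nontrivial_iff_ne_bot _).mp hG.center_nontrivial).symm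
  have hle : commutator G ≤ center G := key hNZ hN ▸ le_sup_left
  by_contra hne
  obtain ⟨N, hGN, hNZ, hN⟩ := hG.exists_le_le_relIndex_eq_prime hle hne
  rw [← key hNZ hN, sup_eq_right.mpr hGN, relIndex_self] at hN
  exact hp.one_lt.ne hN

theorem index_centralizer (hp : p.Prime) (hG : IsPGroup p G) (hse : IsSemiExtraspecial p G)
    {x : G} (hx : x ∉ center G) : (centralizer {x}).index = Nat.card (center G) := by
  have : Fact p.Prime := ⟨hp⟩
  have hGZ := (hse.commutator_eq_center hp hG).le
  refine (index_centralizer_le_card_center hGZ x).antisymm (not_lt.mp fun hlt => hx ?_)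
  rw [← ker_commutatorPairing hGZ x, index_ker] at hlt
  set K := (commutatorPairing hGZ x).range.map (center G).subtype
  have hK : K ≠ center G := fun h => hlt.ne <|
    (card_map_of_injective (center G).subtype_injective).symm.trans
      (congrArg (fun H : Subgroup G => Nat.card H) h)
  obtain ⟨N, hKN, hNZ, hN⟩ := hG.exists_le_le_relIndex_eq_prime (map_subtype_le _) hK
  have := normal_of_le_center hNZ
  rw [← hse.comap_center_quotient hNZ hN]
  refine mem_center_iff.mpr fun q => ?_
  induction q using QuotientGroup.induction_on with
  | H y =>
    have hxy : ((⁅x, y⁆ : G) : G ⧸ N) = 1 :=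
      (QuotientGroup.eq_one_iff _).mpr (hKN ⟨_, ⟨y, rfl⟩, rfl⟩)
    rw [← QuotientGroup.mk'_apply, map_commutatorElement] at hxy
    exact (commutatorElement_eq_one_iff_mul_comm.mp hxy).symm

theorem card_mul_self_le_card_center_mul_card (hp : p.Prime) (hG : IsPGroup p G)
    (hse : IsSemiExtraspecial p G) (A : Subgroup G) [IsMulCommutative A] :
    Nat.card A * Nat.card A ≤ Nat.card (center G) * Nat.card G := by
  have : Fact p.Prime := ⟨hp⟩
  rcases subsingleton_or_nontrivial G with _ | _
  · obtain rfl := Subsingleton.elim A (center G)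
    exact Nat.mul_le_mul_left _ (card_le_card_group _)
  obtain ⟨N, -, hNZ, hN⟩ := hG.exists_le_le_relIndex_eq_prime bot_le
    ((nontrivial_iff_ne_bot _).mp hG.center_nontrivial).symm
  have := normal_of_le_center hNZ
  obtain ⟨-, hcomm, -, hcard⟩ := hse N hNZ hN
  have : IsCyclic (center (G ⧸ N)) := isCyclic_of_prime_card hcard
  have hA := card_le_card_ker_mul_card_map (QuotientGroup.mk' N) A
  rw [QuotientGroup.ker_mk'] at hA
  set Abar := A.map (QuotientGroup.mk' N)
  have hZ : Nat.card (center G) = Nat.card N * Nat.card (center (G ⧸ N)) := by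
    rw [card_eq_card_mul_relIndex hNZ, hN, hcard]
  calc Nat.card A * Nat.card A
      ≤ (Nat.card N * Nat.card Abar) * (Nat.card N * Nat.card Abar) :=
        Nat.mul_self_le_mul_self hA
    _ = Nat.card N * Nat.card N * (Nat.card Abar * Nat.card Abar) := by ring
    _ ≤ Nat.card N * Nat.card N * (Nat.card (center (G ⧸ N)) * Nat.card (G ⧸ N)) :=
        Nat.mul_le_mul_left _
          (card_mul_self_le_card_center_mul_card_of_isMulCommutative hcomm.le Abar)
    _ = Nat.card (center G) * Nat.card G := by
        rw [hZ, N.card_eq_card_quotient_mul_card_subgroup]; ring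

end IsSemiExtraspecial

/-- (Verardi) In a finite semi-extraspecial `p`-group with `|G : G'| = p ^ (2a)` and
`|G'| = p ^ b`: every abelian subgroup has order at most `p ^ (a + b)`, and for every
`g ∉ G'` the center of the centralizer of `g` has order between `p ^ (b + 1)` and
`p ^ (2b)`. -/
theorem semiExtraspecial_abelian_bound {p a b : ℕ} (hp : p.Prime) {G : Type*} [Group G]
    [Finite G] (hpG : IsPGroup p G) (hse : IsSemiExtraspecial p G)
    (hind : (commutator G).index = p ^ (2 * a)) (hcard : Nat.card (commutator G) = p ^ b) :
    (∀ A : Subgroup G, IsMulCommutative A → Nat.card A ≤ p ^ (a + b)) ∧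
    (∀ g : G, g ∉ commutator G →
      p ^ (b + 1) ≤ Nat.card (Subgroup.center (Subgroup.centralizer {g})) ∧
      Nat.card (Subgroup.center (Subgroup.centralizer {g})) ≤ p ^ (2 * b)) := by
  have : Fact p.Prime := ⟨hp⟩
  have hZ := hse.commutator_eq_center hp hpG
  have hcardG : Nat.card G = p ^ b * p ^ (2 * a) := by rw [← hcard, ← hind, card_mul_index]
  rw [hZ] at hcard
  refine ⟨fun A _ => ?_, fun g hg => ⟨?_, ?_⟩⟩
  · have h := hse.card_mul_self_le_card_center_mul_card hp hpG A
    rw [hcard, hcardG] at h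
    exact Nat.mul_self_le_mul_self_iff.mp (h.trans_eq (by ring))
  · rw [hZ] at hg
    simpa [hcard, pow_succ'] using hpG.prime_mul_card_center_le_card_center_centralizer hg
  · rw [hZ] at hg
    have := card_center_centralizer_le_sq hZ.le
      (fun x hx => (hse.index_centralizer hp hpG hx).ge) hg
    rwa [hcard, ← pow_mul, mul_comm] at this
end

section
/- Let (F1,+,*1) and (F2,+,*2) be pre-semifields. Then the semifield groups G(F1) and G(F2) are isomorphic as groups if and only if F1 and F2 are isotopic or anti-isotopic. -/
/-- A (finite) pre-semifield structure on an additive abelian group `F`: a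
multiplication satisfying both distributive laws and having no zero divisors.
(Finiteness and nontriviality of `F` are imposed as hypotheses where needed.) -/
structure PreSemifield (F : Type*) [AddCommGroup F] where
  mul : F → F → F
  add_mul : ∀ a b c : F, mul (a + b) c = mul a c + mul b c
  mul_add : ∀ a b c : F, mul a (b + c) = mul a b + mul a c
  eq_zero_or_eq_zero_of_mul_eq_zero : ∀ a b : F, mul a b = 0 → a = 0 ∨ b = 0

namespace PreSemifield

variable {F : Type*} [AddCommGroup F] (S : PreSemifield F)

theorem mul_zero (a : F) : S.mul a 0 = 0 := by
  have h := S.mul_add a 0 0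
  rw [add_zero] at h
  exact left_eq_add.mp h

theorem zero_mul (b : F) : S.mul 0 b = 0 := by
  have h := S.add_mul 0 0 b
  rw [add_zero] at h
  exact left_eq_add.mp h

theorem mul_neg (a b : F) : S.mul a (-b) = -S.mul a b := by
  have h := S.mul_add a b (-b)
  rw [add_neg_cancel, S.mul_zero] at h
  linear_combination (norm := abel) -h

theorem neg_mul (a b : F) : S.mul (-a) b = -S.mul a b := by
  have h := S.add_mul a (-a) b
  rw [add_neg_cancel, S.zero_mul] at h
  linear_combination (norm := abel) -h

end PreSemifield

/-- The semifield group `G(F)` of a pre-semifield `F`: the set `F × F × F` with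
multiplication `(a₁,b₁,c₁) ⬝ (a₂,b₂,c₂) = (a₁+a₂, b₁+b₂, c₁+c₂+a₁*b₂)`. -/
def SemifieldGroup {F : Type*} [AddCommGroup F] (_S : PreSemifield F) : Type _ :=
  F × F × F

namespace SemifieldGroup

variable {F : Type*} [AddCommGroup F] (S : PreSemifield F)

instance : Group (SemifieldGroup S) where
  mul x y := (x.1 + y.1, x.2.1 + y.2.1, x.2.2 + y.2.2 + S.mul x.1 y.2.1)
  one := ((0 : F), (0 : F), (0 : F))
  inv x := (-x.1, -x.2.1, -x.2.2 + S.mul x.1 x.2.1)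
  mul_assoc x y z := by
    show ((_ : F), (_ : F), (_ : F)) = ((_ : F), (_ : F), (_ : F))
    refine Prod.ext (add_assoc _ _ _) (Prod.ext (add_assoc _ _ _) ?_)
    show x.2.2 + y.2.2 + S.mul x.1 y.2.1 + z.2.2 + S.mul (x.1 + y.1) z.2.1 =
      x.2.2 + (y.2.2 + z.2.2 + S.mul y.1 z.2.1) + S.mul x.1 (y.2.1 + z.2.1)
    rw [S.add_mul, S.mul_add]
    abel
  one_mul x := by
    show ((_ : F), (_ : F), (_ : F)) = x
    refine Prod.ext (zero_add _) (Prod.ext (zero_add _) ?_)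
    show 0 + x.2.2 + S.mul 0 x.2.1 = x.2.2
    rw [S.zero_mul, zero_add, add_zero]
  mul_one x := by
    show ((_ : F), (_ : F), (_ : F)) = x
    refine Prod.ext (add_zero _) (Prod.ext (add_zero _) ?_)
    show x.2.2 + 0 + S.mul x.1 0 = x.2.2
    rw [S.mul_zero, add_zero, add_zero]
  inv_mul_cancel x := by
    show ((_ : F), (_ : F), (_ : F)) = ((0 : F), (0 : F), (0 : F))
    refine Prod.ext (neg_add_cancel _) (Prod.ext (neg_add_cancel _) ?_)
    show -x.2.2 + S.mul x.1 x.2.1 + x.2.2 + S.mul (-x.1) x.2.1 = 0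
    rw [S.neg_mul]
    abel

instance [Finite F] : Finite (SemifieldGroup S) :=
  inferInstanceAs (Finite (F × F × F))

end SemifieldGroup

/-- Two pre-semifields are isotopic if there are additive isomorphisms `α`, `β`, `γ`
with `γ (a *₁ b) = α a *₂ β b` for all `a`, `b`. -/
def PreSemifield.Isotopic {F1 F2 : Type*} [AddCommGroup F1] [AddCommGroup F2]
    (S1 : PreSemifield F1) (S2 : PreSemifield F2) : Prop :=
  ∃ α β γ : F1 ≃+ F2, ∀ a b : F1, γ (S1.mul a b) = S2.mul (α a) (β b)

/-- Two pre-semifields are anti-isotopic if there are additive isomorphisms `α`, `β`,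
`γ` with `γ (a *₁ b) = β b *₂ α a` for all `a`, `b`. -/
def PreSemifield.AntiIsotopic {F1 F2 : Type*} [AddCommGroup F1] [AddCommGroup F2]
    (S1 : PreSemifield F1) (S2 : PreSemifield F2) : Prop :=
  ∃ α β γ : F1 ≃+ F2, ∀ a b : F1, γ (S1.mul a b) = S2.mul (β b) (α a)

/-!
The center of `G(F)` is `{(0,0,c)}` and the commutator of `x` and `y` is the central element
`(0,0, x₁*y₂ - y₁*x₂)`. So an isomorphism `G(F₁) ≅ G(F₂)` induces an additive isomorphism `γ` of
the centers and an additive map `ψ` of the quotients `F₁ × F₁ → F₂ × F₂` carrying the commutator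
form of `F₁` to that of `F₂` along `γ`. Writing `ψ(a,0) = (α₁ a, α₂ a)` and `ψ(0,b) = (β₁ b, β₂ b)`,
the form identity gives `γ(a*b) = α₁ a * β₂ b - β₁ b * α₂ a` together with the symmetry
`α₁ a * α₂ a' = α₁ a' * α₂ a`. Since `F₁` has no zero divisors, `α₁` or `β₁` is injective, hence
bijective by finiteness. If `α₁` is, the symmetry rewrites `β₁ b * α₂ a` as
`α₁ a * α₂ (α₁⁻¹ (β₁ b))`, and `γ(a*b) = α₁ a * (β₂ - α₂ ∘ α₁⁻¹ ∘ β₁) b` is an isotopy. If `β₁`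
is, the same argument applied to the opposite pre-semifield gives an anti-isotopy.
-/

namespace PreSemifield

variable {F F1 F2 : Type*} [AddCommGroup F] [AddCommGroup F1] [AddCommGroup F2]

theorem mul_self_eq_zero (S : PreSemifield F) {a : F} : S.mul a a = 0 ↔ a = 0 :=
  ⟨fun h => (S.eq_zero_or_eq_zero_of_mul_eq_zero a a h).elim id id, fun h => h ▸ S.mul_zero 0⟩

theorem mul_sub (S : PreSemifield F) (a b c : F) : S.mul a (b - c) = S.mul a b - S.mul a c := by
  rw [sub_eq_add_neg, S.mul_add, S.mul_neg, sub_eq_add_neg]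

def op (S : PreSemifield F) : PreSemifield F where
  mul a b := S.mul b a
  add_mul a b c := S.mul_add c a b
  mul_add a b c := S.add_mul b c a
  eq_zero_or_eq_zero_of_mul_eq_zero a b h := (S.eq_zero_or_eq_zero_of_mul_eq_zero b a h).symm

@[simp]
theorem op_mul (S : PreSemifield F) (a b : F) : S.op.mul a b = S.mul b a := rfl

theorem antiIsotopic_iff_isotopic_op {S1 : PreSemifield F1} {S2 : PreSemifield F2} :
    S1.AntiIsotopic S2 ↔ S1.op.Isotopic S2 :=
  ⟨fun ⟨α, β, γ, h⟩ => ⟨β, α, γ, fun a b => h b a⟩,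
    fun ⟨α, β, γ, h⟩ => ⟨β, α, γ, fun a b => h b a⟩⟩

def commForm (S : PreSemifield F) (u v : F × F) : F := S.mul u.1 v.2 - S.mul v.1 u.2

theorem commForm_swap (S : PreSemifield F) (u v : F × F) :
    S.commForm v u = -S.commForm u v :=
  (neg_sub _ _).symm

theorem op_commForm (S : PreSemifield F) (u v : F × F) :
    S.op.commForm u v = S.commForm v.swap u.swap :=
  rfl

section CommForm

variable {S1 : PreSemifield F1} {S2 : PreSemifield F2} (γ : F1 ≃+ F2) (ψ : F1 × F1 →+ F2 × F2)

theorem injective_or_injective_of_commForm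
    (h : ∀ u v, γ (S1.commForm u v) = S2.commForm (ψ u) (ψ v)) :
    (∀ a, (ψ (a, 0)).1 = 0 → a = 0) ∨ (∀ b, (ψ (0, b)).1 = 0 → b = 0) := by
  refine or_iff_not_imp_left.mpr fun hα b hb => ?_
  obtain ⟨a, ha, ha0⟩ : ∃ a, (ψ (a, 0)).1 = 0 ∧ a ≠ 0 := by simpa using hα
  have hab : S1.mul a b = 0 := by
    simpa [commForm, ha, hb, S1.mul_zero, S2.zero_mul] using h (a, 0) (0, b)
  exact (S1.eq_zero_or_eq_zero_of_mul_eq_zero a b hab).resolve_left ha0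

theorem isotopic_of_commForm [Finite F1]
    (h : ∀ u v, γ (S1.commForm u v) = S2.commForm (ψ u) (ψ v))
    (hα : ∀ a, (ψ (a, 0)).1 = 0 → a = 0) : S1.Isotopic S2 := by
  have : Finite F2 := Finite.of_equiv F1 γ.toEquiv
  have bijective (f : F1 →+ F2) (hf : ∀ a, f a = 0 → a = 0) : Function.Bijective f :=
    ((injective_iff_map_eq_zero f).mpr hf).bijective_of_nat_card_le (Nat.card_congr γ.toEquiv).ge
  let α₁ := (AddMonoidHom.fst F2 F2).comp (ψ.comp (AddMonoidHom.inl F1 F1))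
  let α₂ := (AddMonoidHom.snd F2 F2).comp (ψ.comp (AddMonoidHom.inl F1 F1))
  let β₁ := (AddMonoidHom.fst F2 F2).comp (ψ.comp (AddMonoidHom.inr F1 F1))
  let β₂ := (AddMonoidHom.snd F2 F2).comp (ψ.comp (AddMonoidHom.inr F1 F1))
  let α := AddEquiv.ofBijective α₁ (bijective α₁ hα)
  let β := β₂ - α₂.comp (α.symm.toAddMonoidHom.comp β₁)
  have hmul (a b : F1) : γ (S1.mul a b) = S2.mul (α₁ a) (β₂ b) - S2.mul (β₁ b) (α₂ a) := by
    have := h (a, 0) (0, b)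
    simp only [commForm, S1.mul_zero, sub_zero] at this
    exact this
  have hsymm (a a' : F1) : S2.mul (α₁ a') (α₂ a) = S2.mul (α₁ a) (α₂ a') := by
    have := h (a, 0) (a', 0)
    simp only [commForm, S1.mul_zero, sub_zero, map_zero] at this
    exact (sub_eq_zero.mp this.symm).symm
  have isotopy (a b : F1) : γ (S1.mul a b) = S2.mul (α a) (β b) := by
    have : α₁ (α.symm (β₁ b)) = β₁ b := α.apply_symm_apply (β₁ b)
    rw [hmul, ← this, hsymm, ← S2.mul_sub]
    rfl
  have hβ (b : F1) (hb : β b = 0) : b = 0 :=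
    S1.mul_self_eq_zero.mp (γ.map_eq_zero_iff.mp (by rw [isotopy, hb, S2.mul_zero]))
  exact ⟨α, AddEquiv.ofBijective β (bijective β hβ), γ, isotopy⟩

theorem isotopic_or_antiIsotopic_of_commForm [Finite F1]
    (h : ∀ u v, γ (S1.commForm u v) = S2.commForm (ψ u) (ψ v)) :
    S1.Isotopic S2 ∨ S1.AntiIsotopic S2 := by
  refine (injective_or_injective_of_commForm γ ψ h).imp (isotopic_of_commForm γ ψ h) fun hβ => ?_
  -- Swapping coordinates turns the commutator form of `F₁` into minus that of its opposite.
  refine antiIsotopic_iff_isotopic_op.mpr <|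
    isotopic_of_commForm (γ.trans (AddEquiv.neg F2))
      (ψ.comp (AddEquiv.prodComm : F1 × F1 ≃+ F1 × F1).toAddMonoidHom) (fun u v => ?_) hβ
  simp [op_commForm, h, commForm_swap S2 (ψ u.swap)]

end CommForm

end PreSemifield

namespace SemifieldGroup

variable {F F1 F2 : Type*} [AddCommGroup F] [AddCommGroup F1] [AddCommGroup F2]

def mk (S : PreSemifield F) (a b c : F) : SemifieldGroup S := (a, b, c)

section Basic

variable {S : PreSemifield F}

@[ext]
theorem ext {x y : SemifieldGroup S} (h1 : x.1 = y.1) (h2 : x.2.1 = y.2.1) (h3 : x.2.2 = y.2.2) :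
    x = y :=
  Prod.ext h1 (Prod.ext h2 h3)

@[simp] theorem mk_fst (a b c : F) : (mk S a b c).1 = a := rfl
@[simp] theorem mk_snd (a b c : F) : (mk S a b c).2.1 = b := rfl
@[simp] theorem mk_thd (a b c : F) : (mk S a b c).2.2 = c := rfl

@[simp] theorem mul_fst (x y : SemifieldGroup S) : (x * y).1 = x.1 + y.1 := rfl
@[simp] theorem mul_snd (x y : SemifieldGroup S) : (x * y).2.1 = x.2.1 + y.2.1 := rfl
@[simp] theorem mul_thd (x y : SemifieldGroup S) :
    (x * y).2.2 = x.2.2 + y.2.2 + S.mul x.1 y.2.1 := rfl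

def proj (x : SemifieldGroup S) : F × F := (x.1, x.2.1)

@[simp] theorem proj_mk (a b c : F) : proj (mk S a b c) = (a, b) := rfl

theorem proj_mul (x y : SemifieldGroup S) : proj (x * y) = proj x + proj y := rfl

theorem mem_center_iff {w : SemifieldGroup S} :
    w ∈ Subgroup.center (SemifieldGroup S) ↔ proj w = 0 := by
  simp only [Subgroup.mem_center_iff, proj, Prod.mk_eq_zero]
  refine ⟨fun h => ⟨?_, ?_⟩, fun ⟨h1, h2⟩ g => ?_⟩
  · have := congrArg (fun x => x.2.2) (h (mk S 0 w.1 0))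
    simpa [S.zero_mul, S.mul_self_eq_zero] using this
  · have := congrArg (fun x => x.2.2) (h (mk S w.2.1 0 0))
    simpa [S.mul_zero, S.mul_self_eq_zero] using this.symm
  · ext <;> simp [h1, h2, S.zero_mul, S.mul_zero, add_comm]

theorem mul_eq_mk_commForm_mul (x y : SemifieldGroup S) :
    x * y = mk S 0 0 (S.commForm (proj x) (proj y)) * (y * x) := by
  ext <;> simp [proj, PreSemifield.commForm, S.zero_mul] <;> abel

end Basic

variable {S1 : PreSemifield F1} {S2 : PreSemifield F2}

def congr (α β γ : F1 ≃+ F2) (h : ∀ a b, γ (S1.mul a b) = S2.mul (α a) (β b)) :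
    SemifieldGroup S1 ≃* SemifieldGroup S2 where
  toFun x := mk S2 (α x.1) (β x.2.1) (γ x.2.2)
  invFun y := mk S1 (α.symm y.1) (β.symm y.2.1) (γ.symm y.2.2)
  left_inv x := by ext <;> simp
  right_inv y := by ext <;> simp
  map_mul' x y := by ext <;> simp [h]

theorem _root_.PreSemifield.Isotopic.nonempty_mulEquiv (h : S1.Isotopic S2) :
    Nonempty (SemifieldGroup S1 ≃* SemifieldGroup S2) :=
  let ⟨α, β, γ, hαβγ⟩ := h
  ⟨congr α β γ hαβγ⟩

def opEquiv (S : PreSemifield F) : SemifieldGroup S ≃* SemifieldGroup S.op where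
  toFun x := mk S.op x.2.1 x.1 (S.mul x.1 x.2.1 - x.2.2)
  invFun y := mk S y.2.1 y.1 (S.op.mul y.1 y.2.1 - y.2.2)
  left_inv x := by ext <;> simp
  right_inv y := by ext <;> simp
  map_mul' x y := by
    ext <;> simp [S.add_mul, S.mul_add]
    abel

variable (φ : SemifieldGroup S1 ≃* SemifieldGroup S2)

theorem map_mk_zero_zero (c : F1) : φ (mk S1 0 0 c) = mk S2 0 0 (φ (mk S1 0 0 c)).2.2 := by
  have hc : proj (mk S1 0 0 c) = 0 := rfl
  obtain ⟨h1, h2⟩ := Prod.mk_eq_zero.mp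
    (mem_center_iff.mp (MulEquivClass.apply_mem_center φ (mem_center_iff.mpr hc)))
  exact ext h1 h2 rfl

def centerEquiv : F1 ≃+ F2 where
  toFun c := (φ (mk S1 0 0 c)).2.2
  invFun d := (φ.symm (mk S2 0 0 d)).2.2
  left_inv c := by
    simp only
    rw [← map_mk_zero_zero, MulEquiv.symm_apply_apply, mk_thd]
  right_inv d := by
    simp only
    rw [← map_mk_zero_zero φ.symm, MulEquiv.apply_symm_apply, mk_thd]
  map_add' c c' := by
    have : mk S1 0 0 (c + c') = mk S1 0 0 c * mk S1 0 0 c' := by ext <;> simp [S1.zero_mul]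
    rw [this, map_mul, mul_thd, map_mk_zero_zero φ c, mk_fst, S2.zero_mul, add_zero]

/-- The map `F₁ × F₁ → F₂ × F₂` induced by `φ` on the quotients by the centers. -/
def inducedAddHom : F1 × F1 →+ F2 × F2 where
  toFun u := proj (φ (mk S1 u.1 u.2 0))
  map_zero' := by
    change proj (φ 1) = 0
    rw [map_one]
    rfl
  map_add' u v := by
    have : mk S1 (u + v).1 (u + v).2 0 =
        mk S1 u.1 u.2 0 * mk S1 v.1 v.2 0 * mk S1 0 0 (-S1.mul u.1 v.2) := by
      ext <;> simp [S1.mul_zero]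
    rw [this, map_mul, map_mul, proj_mul, proj_mul, map_mk_zero_zero, proj_mk,
      Prod.mk_zero_zero, add_zero]

theorem centerEquiv_commForm (u v : F1 × F1) :
    centerEquiv φ (S1.commForm u v) = S2.commForm (inducedAddHom φ u) (inducedAddHom φ v) := by
  have h := congrArg φ (mul_eq_mk_commForm_mul (mk S1 u.1 u.2 0) (mk S1 v.1 v.2 0))
  rw [map_mul, map_mul, map_mul, map_mk_zero_zero, mul_eq_mk_commForm_mul (φ _)] at h
  exact (congrArg (fun z => z.2.2) (mul_right_cancel h)).symm

end SemifieldGroup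

theorem semifieldGroup_iso_iff_general {F1 F2 : Type*} [AddCommGroup F1] [AddCommGroup F2]
    [Finite F1]
    (S1 : PreSemifield F1) (S2 : PreSemifield F2) :
    Nonempty (SemifieldGroup S1 ≃* SemifieldGroup S2) ↔
      S1.Isotopic S2 ∨ S1.AntiIsotopic S2 := by
  refine ⟨fun ⟨φ⟩ => ?_, fun h => ?_⟩
  · exact PreSemifield.isotopic_or_antiIsotopic_of_commForm (SemifieldGroup.centerEquiv φ)
      (SemifieldGroup.inducedAddHom φ) (SemifieldGroup.centerEquiv_commForm φ)
  · rcases h with h | h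
    · exact h.nonempty_mulEquiv
    · obtain ⟨φ⟩ := (PreSemifield.antiIsotopic_iff_isotopic_op.mp h).nonempty_mulEquiv
      exact ⟨(SemifieldGroup.opEquiv S1).trans φ⟩

/-- (Hiramine; Knarr–Stroppel) The semifield groups of two pre-semifields are
isomorphic if and only if the pre-semifields are isotopic or anti-isotopic. -/
theorem semifieldGroup_iso_iff {F1 F2 : Type*} [AddCommGroup F1] [AddCommGroup F2]
    [Finite F1] [Finite F2] [Nontrivial F1] [Nontrivial F2]
    (S1 : PreSemifield F1) (S2 : PreSemifield F2) :
    Nonempty (SemifieldGroup S1 ≃* SemifieldGroup S2) ↔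
      S1.Isotopic S2 ∨ S1.AntiIsotopic S2 :=
  semifieldGroup_iso_iff_general S1 S2
end
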